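/- arXiv:math/0504087 — 2 statements merged into one kernel-verified Lean document; each statement's English description precedes it below -/
import Mathlib

section
/- If a bounded operator a on H_G commutes with the right creation operator R_w for every w ∈ F⁺(G), and a ξ_v = 0 for every vertex v ∈ V(G), then a = 0. (This yields the faithfulness of the canonical conditional expectation E : W*(G) → D_G: if a ∈ W*(G) and E(a*a) = 0, then a = 0, since E(a*a) = 0 forces ‖a ξ_v‖² = ⟨a*a ξ_v, ξ_v⟩ = 0 for all vertices v.) -/
open ContinuousLinearMap
open scoped InnerProductSpace Classical

/-- An abstract model of the free semigroupoid `𝔽⁺(G)` of a countable directed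
graph `G` (in the sense of Kribs--Power): the elements are the vertices of `G`
(acting as units) together with the admissible finite paths; every element `w`
has a source vertex `s(w)` and a range vertex `r(w)` (with `s(v) = r(v) = v`
for vertices), and the concatenation `wh` is defined exactly when
`s(h) = r(w)`.  The `length` is the number of edges of a path (`0` exactly for
vertices) and is additive under concatenation. -/
structure FreeSemigroupoid where
  /-- the underlying set `𝔽⁺(G)` -/
  W : Type
  countable : Countable W
  /-- `isVertex w` means `w ∈ V(G)`; `¬ isVertex w` means `w ∈ FP(G)` -/
  isVertex : W → Prop
  /-- the source vertex `s(w)` -/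
  src : W → W
  /-- the range vertex `r(w)` -/
  rng : W → W
  isVertex_src : ∀ w, isVertex (src w)
  isVertex_rng : ∀ w, isVertex (rng w)
  src_of_vertex : ∀ v, isVertex v → src v = v
  rng_of_vertex : ∀ v, isVertex v → rng v = v
  /-- the concatenation `wh`, defined exactly when `s(h) = r(w)` -/
  mul : (w h : W) → src h = rng w → W
  src_mul : ∀ w h hc, src (mul w h hc) = src w
  rng_mul : ∀ w h hc, rng (mul w h hc) = rng h
  mul_vertex_left : ∀ v w hc, isVertex v → mul v w hc = w
  mul_vertex_right : ∀ w v hc, isVertex v → mul w v hc = w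
  mul_left_cancel : ∀ w h h' hc hc', mul w h hc = mul w h' hc' → h = h'
  mul_assoc : ∀ w₁ w₂ w₃ (h12 : src w₂ = rng w₁) (h23 : src w₃ = rng w₂)
      (h12_3 : src w₃ = rng (mul w₁ w₂ h12)) (h1_23 : src (mul w₂ w₃ h23) = rng w₁),
      mul (mul w₁ w₂ h12) w₃ h12_3 = mul w₁ (mul w₂ w₃ h23) h1_23
  /-- the number of edges of `w` (`0` exactly for vertices) -/
  length : W → ℕ
  length_eq_zero_iff : ∀ w, length w = 0 ↔ isVertex w
  length_mul : ∀ w h hc, length (mul w h hc) = length w + length h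


/-- If a bounded operator `a` on `H_G` commutes with the right
creation operator `R_w` for every `w ∈ 𝔽⁺(G)`, and `a ξ_v = 0` for every
vertex `v ∈ V(G)`, then `a = 0`.  (This yields the faithfulness of the
canonical conditional expectation `E : W*(G) → D_G`.) -/
theorem statement16 (F : FreeSemigroupoid) {H : Type} [NormedAddCommGroup H]
    [InnerProductSpace ℂ H] [CompleteSpace H] (ξ : HilbertBasis F.W ℂ H)
    (L : F.W → H →L[ℂ] H)
    (hL : ∀ w h : F.W,
      L w (ξ h) = if hc : F.src h = F.rng w then ξ (F.mul w h hc) else 0)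
    (R : F.W → H →L[ℂ] H)
    (hR : ∀ w h : F.W,
      R w (ξ h) = if hc : F.src w = F.rng h then ξ (F.mul h w hc) else 0)
    (a : H →L[ℂ] H)
    (hcomm : ∀ w : F.W, a * R w = R w * a)
    (hvan : ∀ v : F.W, F.isVertex v → a (ξ v) = 0) :
    a = 0 := by
  have key : ∀ w : F.W, a (ξ w) = 0 := by
    intro w
    have hv : F.isVertex (F.src w) := F.isVertex_src w
    have hc : F.src w = F.rng (F.src w) := (F.rng_of_vertex _ hv).symm
    have h1 : R w (ξ (F.src w)) = ξ w := by
      rw [hR, dif_pos hc, F.mul_vertex_left _ _ _ hv]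
    have h2 : a (R w (ξ (F.src w))) = R w (a (ξ (F.src w))) := by
      have := congrArg (fun T : H →L[ℂ] H => T (ξ (F.src w))) (hcomm w)
      simpa using this
    rw [h1] at h2
    rw [h2, hvan _ hv, map_zero]
  have hd : Dense ((Submodule.span ℂ (Set.range (ξ : F.W → H)) : Submodule ℂ H) : Set H) :=
    ((Submodule.span ℂ (Set.range (ξ : F.W → H))).dense_iff_topologicalClosure_eq_top).2 ξ.dense_span
  refine ContinuousLinearMap.ext_on hd ?_
  rintro x ⟨w, rfl⟩
  simp [key w]
end

section
/- Let l ∈ FP(G) be a loop based at the vertex v (s(l) = r(l) = v). Then for every k ≥ 0, ⟨(L_l + L_l*)^{2k} ξ_v, ξ_v⟩ equals the k-th Catalan number C_k = (2k)!/(k!(k+1)!); for every odd n, ⟨(L_l + L_l*)^n ξ_u, ξ_u⟩ = 0 for every vertex u; and for every n ≥ 1 and every vertex u ≠ v, ⟨(L_l + L_l*)^n ξ_u, ξ_u⟩ = 0. (This is the concrete content of the statement that L_l + L_l* is a D_G-semicircular element for a loop l.) -/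
/-!
Along the powers `l^m` of the loop, `T = L_l + L_l*` acts as the adjacency operator of the
half-line: `T ξ_{l^0} = ξ_{l^1}` and `T ξ_{l^(m+1)} = ξ_{l^(m+2)} + ξ_{l^m}`, so
`⟨T^n ξ_{l^m}, ξ_v⟩` counts nonnegative `±1` walks of length `n` from height `m` to `0`.
By the reflection principle there are `C(n, j) - C(n, j + 1)` of them when `n + m = 2j`, which
for `m = 0` is the Catalan number, and none when `n + m` is odd. At a vertex `u ≠ v` both
`L_l` and `L_l*` vanish on `ξ_u`.
-/

open ContinuousLinearMap
open scoped InnerProductSpace Classical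

namespace HilbertBasis

variable {ι 𝕜 E : Type*} [RCLike 𝕜] [NormedAddCommGroup E] [InnerProductSpace 𝕜 E]

theorem ext_inner_right (b : HilbertBasis ι 𝕜 E) {x y : E}
    (h : ∀ i, ⟪x, b i⟫_𝕜 = ⟪y, b i⟫_𝕜) : x = y := by
  refine b.repr.injective (lp.ext (funext fun i => ?_))
  rw [b.repr_apply_apply, b.repr_apply_apply, ← inner_conj_symm, h, inner_conj_symm]

theorem inner_eq_ite [DecidableEq ι] (b : HilbertBasis ι 𝕜 E) (i j : ι) :
    ⟪b i, b j⟫_𝕜 = if i = j then 1 else 0 :=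
  orthonormal_iff_ite.mp b.orthonormal i j

end HilbertBasis

/-- The number of `±1` walks of length `n` from height `m` to height `0` that never go below
`0`. -/
def ballotCount : ℕ → ℕ → ℕ
  | 0, 0 => 1
  | 0, _ + 1 => 0
  | n + 1, 0 => ballotCount n 1
  | n + 1, m + 1 => ballotCount n (m + 2) + ballotCount n m

theorem ballotCount_eq_zero_of_odd : ∀ {n m : ℕ}, Odd (n + m) → ballotCount n m = 0
  | 0, 0, h => absurd h (by decide)
  | 0, _ + 1, _ => rfl
  | n + 1, 0, h => ballotCount_eq_zero_of_odd (n := n) (m := 1) (by simpa using h)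
  | n + 1, m + 1, ⟨k, hk⟩ => by
    rw [ballotCount, ballotCount_eq_zero_of_odd (n := n) (m := m + 2) ⟨k, by omega⟩,
      ballotCount_eq_zero_of_odd (n := n) (m := m) ⟨k - 1, by omega⟩]

/-- The reflection principle, written without truncated subtraction. -/
theorem ballotCount_add_choose :
    ∀ {n m j : ℕ}, n + m = 2 * j → ballotCount n m + n.choose (j + 1) = n.choose j
  | 0, 0, 0, _ => rfl
  | 0, 0, _ + 1, h => by omega
  | 0, m + 1, j, h => by
    obtain ⟨i, rfl⟩ : ∃ i, j = i + 1 := ⟨j - 1, by omega⟩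
    rfl
  | n + 1, 0, j, h => by
    obtain ⟨i, rfl⟩ : ∃ i, j = i + 1 := ⟨j - 1, by omega⟩
    have ih := ballotCount_add_choose (n := n) (m := 1) (j := i + 1) (by omega)
    have hsymm : n.choose i = n.choose (i + 1) := by
      rw [← Nat.choose_symm (show i + 1 ≤ n by omega), show n - (i + 1) = i by omega]
    have hpascal₁ := Nat.choose_succ_succ' n i
    have hpascal₂ := Nat.choose_succ_succ' n (i + 1)
    show ballotCount n 1 + _ = _
    omega
  | n + 1, m + 1, j, h => by
    obtain ⟨i, rfl⟩ : ∃ i, j = i + 1 := ⟨j - 1, by omega⟩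
    have ih₁ := ballotCount_add_choose (n := n) (m := m + 2) (j := i + 1) (by omega)
    have ih₂ := ballotCount_add_choose (n := n) (m := m) (j := i) (by omega)
    have hpascal₁ := Nat.choose_succ_succ' n i
    have hpascal₂ := Nat.choose_succ_succ' n (i + 1)
    show ballotCount n (m + 2) + ballotCount n m + _ = _
    omega

theorem ballotCount_zero_eq_catalan (k : ℕ) : ballotCount (2 * k) 0 = catalan k := by
  have hreflect := ballotCount_add_choose (n := 2 * k) (m := 0) (j := k) (by omega)
  have hchoose := Nat.choose_succ_right_eq (2 * k) k
  have hcatalan := succ_mul_catalan_eq_centralBinom k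
  rw [show 2 * k - k = k by omega] at hchoose
  rw [Nat.centralBinom_eq_two_mul_choose] at hcatalan
  apply Nat.eq_of_mul_eq_mul_left k.succ_pos
  nlinarith

namespace FreeSemigroupoid

variable (F : FreeSemigroupoid)

theorem length_eq_zero {u : F.W} (hu : F.isVertex u) : F.length u = 0 :=
  (F.length_eq_zero_iff u).2 hu

theorem ne_mul_of_isVertex {u w : F.W} (hu : F.isVertex u) (hw : ¬F.isVertex w) (g : F.W)
    (hc : F.src g = F.rng w) : u ≠ F.mul w g hc := by
  intro h
  have := F.length_mul w g hc
  rw [← h, F.length_eq_zero hu] at this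
  exact hw ((F.length_eq_zero_iff w).1 (by omega))

/-- The powers `l^m` of a loop, `l^0 = r(l)`; the subtype records that `l · l^m` is defined. -/
def loopPow (l : F.W) (hloop : F.src l = F.rng l) : ℕ → {w : F.W // F.src w = F.rng l}
  | 0 => ⟨F.rng l, F.src_of_vertex _ (F.isVertex_rng l)⟩
  | m + 1 => ⟨F.mul l (loopPow l hloop m) (loopPow l hloop m).2, by rw [F.src_mul, hloop]⟩

theorem length_loopPow (l : F.W) (hloop : F.src l = F.rng l) (m : ℕ) :
    F.length (F.loopPow l hloop m) = m * F.length l := by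
  induction m with
  | zero => simpa [loopPow] using F.length_eq_zero (F.isVertex_rng l)
  | succ m ih => simp only [loopPow, F.length_mul, ih]; ring

theorem loopPow_eq_rng_iff {l : F.W} (hloop : F.src l = F.rng l) (hl : ¬F.isVertex l) {m : ℕ} :
    (F.loopPow l hloop m : F.W) = F.rng l ↔ m = 0 := by
  refine ⟨fun h => ?_, fun h => h ▸ rfl⟩
  have hlen := F.length_loopPow l hloop m
  rw [h, F.length_eq_zero (F.isVertex_rng l)] at hlen
  have : F.length l ≠ 0 := fun h0 => hl ((F.length_eq_zero_iff l).1 h0)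
  simpa [this] using hlen.symm

end FreeSemigroupoid

section Creation

variable {F : FreeSemigroupoid} {H : Type} [NormedAddCommGroup H] [InnerProductSpace ℂ H]
  {ξ : HilbertBasis F.W ℂ H} {L : F.W → H →L[ℂ] H}

def IsCreationFamily (ξ : HilbertBasis F.W ℂ H) (L : F.W → H →L[ℂ] H) : Prop :=
  ∀ w h : F.W, L w (ξ h) = if hc : F.src h = F.rng w then ξ (F.mul w h hc) else 0

theorem IsCreationFamily.apply_of_rng_ne (hL : IsCreationFamily ξ L) {w u : F.W}
    (hu : F.isVertex u) (hne : u ≠ F.rng w) : L w (ξ u) = 0 := by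
  rw [hL, dif_neg (by rwa [F.src_of_vertex u hu])]

theorem IsCreationFamily.apply_of_src_eq (hL : IsCreationFamily ξ L) {w h : F.W}
    (hc : F.src h = F.rng w) : L w (ξ h) = ξ (F.mul w h hc) := by
  rw [hL, dif_pos hc]

variable [CompleteSpace H]

theorem IsCreationFamily.adjoint_apply_mul (hL : IsCreationFamily ξ L) (w g : F.W)
    (hc : F.src g = F.rng w) : adjoint (L w) (ξ (F.mul w g hc)) = ξ g := by
  refine ξ.ext_inner_right fun h => ?_
  rw [adjoint_inner_left, hL, ξ.inner_eq_ite]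
  split_ifs with hch hgh hgh
  · subst hgh
    rw [ξ.inner_eq_ite, if_pos rfl]
  · rw [ξ.inner_eq_ite, if_neg fun heq => hgh (F.mul_left_cancel w g h hc hch heq)]
  · exact absurd (hgh ▸ hc) hch
  · exact inner_zero_right _

theorem IsCreationFamily.adjoint_apply_vertex (hL : IsCreationFamily ξ L) {w u : F.W}
    (hw : ¬F.isVertex w) (hu : F.isVertex u) : adjoint (L w) (ξ u) = 0 := by
  refine ξ.ext_inner_right fun h => ?_
  rw [adjoint_inner_left, hL, inner_zero_left]
  split_ifs with hc
  · rw [ξ.inner_eq_ite, if_neg (F.ne_mul_of_isVertex hu hw h hc)]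
  · exact inner_zero_right _

variable (hL : IsCreationFamily ξ L) {l : F.W} (hloop : F.src l = F.rng l) (hl : ¬F.isVertex l)
include hL

theorem IsCreationFamily.add_adjoint_apply_loopPow_succ (m : ℕ) :
    (L l + adjoint (L l)) (ξ (F.loopPow l hloop (m + 1))) =
      ξ (F.loopPow l hloop (m + 2)) + ξ (F.loopPow l hloop m) := by
  rw [add_apply, hL.apply_of_src_eq (F.loopPow l hloop (m + 1)).2]
  exact congrArg _ (hL.adjoint_apply_mul l _ (F.loopPow l hloop m).2)

include hl

theorem IsCreationFamily.add_adjoint_apply_vertex_of_ne {u : F.W} (hu : F.isVertex u)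
    (hne : u ≠ F.rng l) : (L l + adjoint (L l)) (ξ u) = 0 := by
  rw [add_apply, hL.apply_of_rng_ne hu hne, hL.adjoint_apply_vertex hl hu, add_zero]

theorem IsCreationFamily.add_adjoint_apply_loopPow_zero :
    (L l + adjoint (L l)) (ξ (F.loopPow l hloop 0)) = ξ (F.loopPow l hloop 1) := by
  change (L l + adjoint (L l)) (ξ (F.rng l)) = _
  rw [add_apply, hL.adjoint_apply_vertex hl (F.isVertex_rng l), add_zero]
  exact hL.apply_of_src_eq (F.loopPow l hloop 0).2

theorem IsCreationFamily.inner_add_adjoint_pow_loopPow (n m : ℕ) :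
    ⟪((L l + adjoint (L l)) ^ n) (ξ (F.loopPow l hloop m)), ξ (F.rng l)⟫_ℂ =
      ballotCount n m := by
  induction n generalizing m with
  | zero =>
    rw [pow_zero, one_apply_eq_self, ξ.inner_eq_ite]
    cases m with
    | zero => simp [FreeSemigroupoid.loopPow, ballotCount]
    | succ m => simp [F.loopPow_eq_rng_iff hloop hl, ballotCount]
  | succ n ih =>
    rw [pow_succ, mul_apply_eq_comp]
    cases m with
    | zero => rw [hL.add_adjoint_apply_loopPow_zero hloop hl, ih, ballotCount]
    | succ m =>
      rw [hL.add_adjoint_apply_loopPow_succ hloop, map_add, inner_add_left, ih, ih, ballotCount,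
        Nat.cast_add]

end Creation

theorem statement18_general (F : FreeSemigroupoid) {H : Type} [NormedAddCommGroup H]
    [InnerProductSpace ℂ H] [CompleteSpace H] (ξ : HilbertBasis F.W ℂ H)
    (L : F.W → H →L[ℂ] H)
    (hL : ∀ w h : F.W,
      L w (ξ h) = if hc : F.src h = F.rng w then ξ (F.mul w h hc) else 0)
    (l v : F.W) (hl : ¬ F.isVertex l)
    (hs : F.src l = v) (hr : F.rng l = v) :
    (∀ k : ℕ,
      ⟪((L l + adjoint (L l)) ^ (2 * k)) (ξ v), ξ v⟫_ℂ = (catalan k : ℂ)) ∧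
    (∀ n : ℕ, Odd n → ∀ u : F.W, F.isVertex u →
      ⟪((L l + adjoint (L l)) ^ n) (ξ u), ξ u⟫_ℂ = 0) ∧
    (∀ n : ℕ, 1 ≤ n → ∀ u : F.W, F.isVertex u → u ≠ v →
      ⟪((L l + adjoint (L l)) ^ n) (ξ u), ξ u⟫_ℂ = 0) := by
  subst hr
  replace hL : IsCreationFamily ξ L := hL
  have hmoment : ∀ n : ℕ,
      ⟪((L l + adjoint (L l)) ^ n) (ξ (F.rng l)), ξ (F.rng l)⟫_ℂ = ballotCount n 0 :=
    fun n => hL.inner_add_adjoint_pow_loopPow hs hl n 0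
  have hvanish : ∀ n : ℕ, 1 ≤ n → ∀ u : F.W, F.isVertex u → u ≠ F.rng l →
      ⟪((L l + adjoint (L l)) ^ n) (ξ u), ξ u⟫_ℂ = 0 := by
    intro n hn u hu hne
    obtain ⟨n, rfl⟩ := Nat.exists_eq_add_of_le' hn
    rw [pow_succ, mul_apply_eq_comp, hL.add_adjoint_apply_vertex_of_ne hl hu hne, map_zero,
      inner_zero_left]
  refine ⟨fun k => ?_, fun n hn u hu => ?_, hvanish⟩
  · rw [hmoment, ballotCount_zero_eq_catalan]
  · rcases eq_or_ne u (F.rng l) with rfl | hne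
    · rw [hmoment, ballotCount_eq_zero_of_odd (by simpa using hn), Nat.cast_zero]
    · exact hvanish n hn.pos u hu hne

/-- Let `l ∈ FP(G)` be a loop based at the vertex `v`
(`s(l) = r(l) = v`).  Then for every `k ≥ 0`,
`⟨(L_l + L_l⋆)^{2k} ξ_v, ξ_v⟩` equals the `k`-th Catalan number
`C_k = (2k)!/(k!(k+1)!)`; for every odd `n`,
`⟨(L_l + L_l⋆)^n ξ_u, ξ_u⟩ = 0` for every vertex `u`; and for every `n ≥ 1`
and every vertex `u ≠ v`, `⟨(L_l + L_l⋆)^n ξ_u, ξ_u⟩ = 0`.  (This is the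
concrete content of the `D_G`-semicircularity of `L_l + L_l⋆`.) -/
theorem statement18 (F : FreeSemigroupoid) {H : Type} [NormedAddCommGroup H]
    [InnerProductSpace ℂ H] [CompleteSpace H] (ξ : HilbertBasis F.W ℂ H)
    (L : F.W → H →L[ℂ] H)
    (hL : ∀ w h : F.W,
      L w (ξ h) = if hc : F.src h = F.rng w then ξ (F.mul w h hc) else 0)
    (l v : F.W) (hv : F.isVertex v) (hl : ¬ F.isVertex l)
    (hs : F.src l = v) (hr : F.rng l = v) :
    (∀ k : ℕ,
      ⟪((L l + adjoint (L l)) ^ (2 * k)) (ξ v), ξ v⟫_ℂ = (catalan k : ℂ)) ∧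
    (∀ n : ℕ, Odd n → ∀ u : F.W, F.isVertex u →
      ⟪((L l + adjoint (L l)) ^ n) (ξ u), ξ u⟫_ℂ = 0) ∧
    (∀ n : ℕ, 1 ≤ n → ∀ u : F.W, F.isVertex u → u ≠ v →
      ⟪((L l + adjoint (L l)) ^ n) (ξ u), ξ u⟫_ℂ = 0) :=
  statement18_general F ξ L hL l v hl hs hr
end
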